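/- arXiv:2109.09053 — 2 statements merged into one kernel-verified Lean document; each statement's English description precedes it below -/
import Mathlib

section
/- There exists a constant c > 0 such that for every h ∈ (0,1) there is a nonzero function f ∈ L²(ℝ²) whose Fourier transform f̂ is supported in the set h⁻¹Y = [0, h⁻¹] × [0, 1/10] and which satisfies ‖1_X f‖_{L²(ℝ²)} ≥ c ‖f‖_{L²(ℝ²)}, where X = [0, h/10] × [0,1]. In particular, there are no constants C, β > 0 such that every f ∈ L²(ℝ²) with supp f̂ ⊆ h⁻¹Y satisfies ‖1_X f‖_{L²(ℝ²)} ≤ C h^β ‖f‖_{L²(ℝ²)} for all h ∈ (0,1). -/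
open MeasureTheory FourierTransform Set

/-- `g` is the Fourier–Plancherel transform of `f ∈ L²(ℝ²)` (convention
`f̂(ξ) = ∫ e^{-2πix·ξ} f(x) dx`), characterized by duality against Schwartz functions. -/
def IsL2FourierTransform2 (f g : EuclideanSpace ℝ (Fin 2) → ℂ) : Prop :=
  ∀ φ : SchwartzMap (EuclideanSpace ℝ (Fin 2)) ℂ, ∫ ξ, g ξ * φ ξ = ∫ x, f x * 𝓕 (⇑φ) x

/-!
Take `f̂ = 1_{[0,h⁻¹] × [0,1/10]}`, so that `f(x) = F_{h⁻¹}(x₁) F_{1/10}(x₂)` with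
`F_L(x) = ∫₀ᴸ e^{2πixt} dt`. From `|F_L(x)| ≤ min (L, 1/(π|x|))` one gets `‖F_L‖₂² ≤ 2L`, while
Jordan's inequality gives `|F_L(x)| ≥ 2L/π` as long as `|x| L ≤ 1/2`. In both coordinates the side
`s` of the strip `X = [0,h/10] × [0,1]` and the frequency width `L` satisfy `s L = 1/10`, so each
factor of `1_X f` keeps at least a fraction `1/(√10 π)` of the `L²` norm of the corresponding factor
of `f`, uniformly in `h`; a bound `C h^β` tends to `0` and cannot hold.
-/

open scoped Real ENNReal

theorem MeasureTheory.Integrable.continuous_fourierInv {V E : Type*} [NormedAddCommGroup V]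
    [InnerProductSpace ℝ V] [FiniteDimensional ℝ V] [MeasurableSpace V] [BorelSpace V]
    [NormedAddCommGroup E] [NormedSpace ℂ E] {f : V → E} (hf : Integrable f) :
    Continuous (𝓕⁻ f) :=
  VectorFourier.fourierIntegral_continuous Real.continuous_fourierChar
    (by simp only [LinearMap.neg_apply, innerₗ_apply_apply]; fun_prop) hf

theorem integral_mul_eq_integral_fourierInv_mul_fourier {V : Type*} [NormedAddCommGroup V]
    [InnerProductSpace ℝ V] [FiniteDimensional ℝ V] [MeasurableSpace V] [BorelSpace V]
    {g : V → ℂ} (hg : Integrable g) (φ : SchwartzMap V ℂ) :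
    ∫ ξ, g ξ * φ ξ = ∫ x, 𝓕⁻ g x * 𝓕 (⇑φ) x := by
  have hFφ : Integrable (𝓕 (⇑φ)) := by
    rw [← SchwartzMap.fourier_coe]; exact (𝓕 φ).integrable
  have hflip : (-innerₗ V).flip = -innerₗ V := by
    ext x y; simp [real_inner_comm]
  have key := VectorFourier.integral_bilin_fourierIntegral_eq_flip (ContinuousLinearMap.mul ℂ ℂ)
    Real.continuous_fourierChar (L := -innerₗ V)
    (by simp only [LinearMap.neg_apply, innerₗ_apply_apply]; fun_prop) hg hFφ
  rw [hflip] at key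
  have hinv : VectorFourier.fourierIntegral 𝐞 volume (-innerₗ V) (𝓕 (⇑φ)) = ⇑φ :=
    φ.continuous.fourierInv_fourier_eq φ.integrable hFφ
  simp only [ContinuousLinearMap.mul_apply', hinv] at key
  exact key.symm

open Filter Topology in
lemma exists_mem_Ioo_mul_rpow_lt {C β c : ℝ} (hβ : 0 < β) (hc : 0 < c) :
    ∃ h ∈ Ioo (0 : ℝ) 1, C * h ^ β < c := by
  have hlim : Tendsto (fun h : ℝ => C * h ^ β) (𝓝[>] 0) (𝓝 0) := by
    have := ((Real.continuousAt_rpow_const 0 β (Or.inr hβ.le)).tendsto.const_mul C).mono_left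
      (nhdsWithin_le_nhds (s := Ioi 0))
    simpa [Real.zero_rpow hβ.ne'] using this
  exact ((hlim.eventually (gt_mem_nhds hc)).and (Ioo_mem_nhdsGT one_pos)).exists.imp
    fun h hh => ⟨hh.2, hh.1⟩

section ProdMeasure

variable {α β : Type*} [MeasurableSpace α] [MeasurableSpace β] {μ : Measure α} {ν : Measure β}
  [SFinite ν] {a : α → ℂ} {b : β → ℂ} {p : ℝ≥0∞}

lemma eLpNorm_mul_prod (ha : AEStronglyMeasurable a μ) (hb : AEStronglyMeasurable b ν)
    (hp0 : p ≠ 0) (hp : p ≠ ∞) :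
    eLpNorm (fun z : α × β => a z.1 * b z.2) p (μ.prod ν) = eLpNorm a p μ * eLpNorm b p ν := by
  simp only [eLpNorm_eq_lintegral_rpow_enorm_toReal hp0 hp, enorm_mul,
    ENNReal.mul_rpow_of_nonneg _ _ ENNReal.toReal_nonneg]
  rw [lintegral_prod_mul (ha.enorm.pow_const _) (hb.enorm.pow_const _),
    ENNReal.mul_rpow_of_nonneg _ _ (by positivity)]

lemma MeasureTheory.MemLp.mul_prod (ha : MemLp a p μ) (hb : MemLp b p ν) (hp0 : p ≠ 0)
    (hp : p ≠ ∞) :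
    MemLp (fun z : α × β => a z.1 * b z.2) p (μ.prod ν) :=
  ⟨ha.1.comp_fst.mul hb.1.comp_snd,
    by rw [eLpNorm_mul_prod ha.1 hb.1 hp0 hp]; exact ENNReal.mul_lt_top ha.2 hb.2⟩

end ProdMeasure

noncomputable def box (L : ℝ) : ℝ → ℂ := (Icc 0 L).indicator 1

lemma memLp_box (L : ℝ) (p : ℝ≥0∞) : MemLp (box L) p :=
  memLp_indicator_const p measurableSet_Icc 1 (Or.inr measure_Icc_lt_top.ne)

noncomputable def boxKernel (L : ℝ) : ℝ → ℂ := 𝓕⁻ (box L)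

section BoxKernel

variable {L x : ℝ}

lemma boxKernel_eq_setIntegral (L x : ℝ) :
    boxKernel L x = ∫ t in Icc 0 L, Complex.exp (↑(2 * π * x * t) * Complex.I) := by
  rw [boxKernel, box, Real.fourierInv_eq', ← integral_indicator measurableSet_Icc]
  congr 1 with t
  by_cases ht : t ∈ Icc 0 L
  · simp only [indicator_of_mem ht, Pi.one_apply, smul_eq_mul, mul_one, RCLike.inner_apply,
      conj_trivial]
    ring_nf
  · simp [ht]

lemma boxKernel_zero (hL : 0 ≤ L) : boxKernel L 0 = L := by
  simp [boxKernel_eq_setIntegral, hL]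

lemma boxKernel_of_ne_zero (hL : 0 ≤ L) (hx : x ≠ 0) :
    boxKernel L x = (Complex.exp (Complex.I * ↑(2 * π * x * L)) - 1) /
      (Complex.I * ↑(2 * π * x)) := by
  have hc : Complex.I * ↑(2 * π * x) ≠ 0 := by simp [Real.pi_ne_zero, hx]
  rw [boxKernel_eq_setIntegral, integral_Icc_eq_integral_Ioc, ← intervalIntegral.integral_of_le hL]
  simp_rw [show ∀ t : ℝ, (↑(2 * π * x * t) * Complex.I) = Complex.I * ↑(2 * π * x) * t by
    intro t; push_cast; ring]
  rw [integral_exp_mul_complex hc, Complex.ofReal_zero, mul_zero, Complex.exp_zero]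
  congr 3
  push_cast; ring

lemma norm_boxKernel_of_ne_zero (hL : 0 ≤ L) (hx : x ≠ 0) :
    ‖boxKernel L x‖ = |Real.sin (π * x * L)| / (π * |x|) := by
  rw [boxKernel_of_ne_zero hL hx, norm_div, Complex.norm_exp_I_mul_ofReal_sub_one]
  simp only [norm_mul, Complex.norm_I, Complex.norm_real, Real.norm_eq_abs,
    abs_two, abs_of_pos Real.pi_pos, one_mul]
  rw [show 2 * π * x * L / 2 = π * x * L by ring]
  field_simp

lemma norm_boxKernel_le (hL : 0 ≤ L) (x : ℝ) : ‖boxKernel L x‖ ≤ L := by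
  rw [boxKernel_eq_setIntegral]
  have := norm_setIntegral_le_of_norm_le_const (μ := volume) (s := Icc 0 L) (C := 1)
    measure_Icc_lt_top (f := fun t : ℝ => Complex.exp (↑(2 * π * x * t) * Complex.I))
    (fun t _ => (Complex.norm_exp_ofReal_mul_I _).le)
  simpa [Real.volume_real_Icc, hL] using this

lemma norm_boxKernel_le_inv (hL : 0 ≤ L) (hx : x ≠ 0) : ‖boxKernel L x‖ ≤ (π * |x|)⁻¹ := by
  rw [norm_boxKernel_of_ne_zero hL hx, div_eq_mul_inv]
  exact mul_le_of_le_one_left (by positivity) (Real.abs_sin_le_one _)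

lemma two_mul_div_pi_le_norm_boxKernel (hL : 0 ≤ L) (hxL : |x| * L ≤ 1 / 2) :
    2 * L / π ≤ ‖boxKernel L x‖ := by
  rcases eq_or_ne x 0 with rfl | hx
  · rw [boxKernel_zero hL, Complex.norm_real, Real.norm_of_nonneg hL]
    exact div_le_of_le_mul₀ Real.pi_pos.le hL (by nlinarith [Real.pi_gt_three])
  have hπ := Real.pi_pos
  have hx' : 0 < |x| := abs_pos.2 hx
  -- Jordan's inequality `2 y / π ≤ sin y` at `y = π |x| L ≤ π / 2`
  have hJordan := Real.mul_le_sin (x := π * |x| * L) (by positivity) (by nlinarith)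
  rw [norm_boxKernel_of_ne_zero hL hx, le_div_iff₀ (by positivity)]
  calc 2 * L / π * (π * |x|) = 2 / π * (π * |x| * L) := by field_simp
    _ ≤ Real.sin (π * |x| * L) := hJordan
    _ ≤ |Real.sin (π * x * L)| := by
        rcases abs_choice x with h | h <;> rw [h] <;> simp [le_abs_self, neg_le_abs]

lemma continuous_boxKernel (L : ℝ) : Continuous (boxKernel L) :=
  (memLp_one_iff_integrable.1 (memLp_box L 1)).continuous_fourierInv

lemma norm_boxKernel_sq_le (hL : 0 < L) (x : ℝ) :
    ‖boxKernel L x‖ ^ 2 ≤ 2 * L ^ 2 / (1 + (π * L * x) ^ 2) := by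
  have hy := sq_nonneg (π * L * x)
  rw [le_div_iff₀ (by positivity)]
  rcases le_or_gt ((π * L * x) ^ 2) 1 with hsmall | hlarge
  · have := norm_boxKernel_le hL.le x
    have : ‖boxKernel L x‖ ^ 2 ≤ L ^ 2 := pow_le_pow_left₀ (norm_nonneg _) this 2
    nlinarith
  · have hx : x ≠ 0 := by rintro rfl; norm_num at hlarge
    have hbound := pow_le_pow_left₀ (norm_nonneg _) (norm_boxKernel_le_inv hL.le hx) 2
    have hprod : ‖boxKernel L x‖ ^ 2 * (π * L * x) ^ 2 ≤ L ^ 2 := by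
      calc ‖boxKernel L x‖ ^ 2 * (π * L * x) ^ 2 ≤ ((π * |x|)⁻¹) ^ 2 * (π * L * x) ^ 2 := by
            gcongr
        _ = L ^ 2 := by
            rw [inv_pow, mul_pow, mul_pow, mul_pow, sq_abs]
            field_simp
    nlinarith

lemma integrable_two_mul_sq_div_one_add_sq (hL : 0 < L) :
    Integrable (fun x : ℝ => 2 * L ^ 2 / (1 + (π * L * x) ^ 2)) := by
  simp_rw [div_eq_mul_inv]
  exact (integrable_inv_one_add_sq.comp_mul_left' (by positivity)).const_mul _

lemma integral_two_mul_sq_div_one_add_sq (hL : 0 < L) :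
    ∫ x : ℝ, 2 * L ^ 2 / (1 + (π * L * x) ^ 2) = 2 * L := by
  have hπL : 0 < π * L := by positivity
  simp_rw [div_eq_mul_inv]
  rw [integral_const_mul, Measure.integral_comp_mul_left (fun y : ℝ => (1 + y ^ 2)⁻¹) (π * L),
    integral_univ_inv_one_add_sq, smul_eq_mul, abs_of_pos (inv_pos.2 hπL)]
  field_simp

lemma eLpNorm_boxKernel_le (hL : 0 < L) :
    eLpNorm (boxKernel L) 2 volume ≤ ENNReal.ofReal √(2 * L) := by
  have hsq : ∫⁻ x, ‖boxKernel L x‖ₑ ^ (2 : ℝ) ≤ ENNReal.ofReal (2 * L) := by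
    calc ∫⁻ x, ‖boxKernel L x‖ₑ ^ (2 : ℝ)
        ≤ ∫⁻ x, ENNReal.ofReal (2 * L ^ 2 / (1 + (π * L * x) ^ 2)) := by
          refine lintegral_mono fun x => ?_
          rw [← ofReal_norm, ENNReal.ofReal_rpow_of_nonneg (norm_nonneg _) two_pos.le]
          exact ENNReal.ofReal_le_ofReal (by exact_mod_cast norm_boxKernel_sq_le hL x)
      _ = ENNReal.ofReal (2 * L) := by
          rw [← integral_two_mul_sq_div_one_add_sq hL,
            ofReal_integral_eq_lintegral_ofReal (integrable_two_mul_sq_div_one_add_sq hL)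
            (Filter.Eventually.of_forall fun x => by positivity)]
  rw [eLpNorm_eq_lintegral_rpow_enorm_toReal two_ne_zero ENNReal.ofNat_ne_top,
    Real.sqrt_eq_rpow, ← ENNReal.ofReal_rpow_of_nonneg (by positivity) (by norm_num)]
  simp only [ENNReal.toReal_ofNat]
  exact ENNReal.rpow_le_rpow hsq (by norm_num)

lemma le_eLpNorm_indicator_boxKernel {s : ℝ} (hL : 0 ≤ L) (hs : 0 ≤ s) (hsL : s * L ≤ 1 / 2) :
    ENNReal.ofReal (2 * L / π * √s) ≤ eLpNorm ((Icc 0 s).indicator (boxKernel L)) 2 volume := by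
  have hconst : eLpNorm ((Icc 0 s).indicator fun _ => ((2 * L / π : ℝ) : ℂ)) 2 volume =
      ENNReal.ofReal (2 * L / π * √s) := by
    rw [eLpNorm_indicator_const measurableSet_Icc two_ne_zero ENNReal.ofNat_ne_top,
      Real.volume_Icc, sub_zero, ← ofReal_norm, Complex.norm_real,
      Real.norm_of_nonneg (by positivity), ENNReal.ofReal_mul (by positivity),
      Real.sqrt_eq_rpow, ENNReal.ofReal_rpow_of_nonneg hs (by norm_num)]
    norm_num [mul_comm]
  rw [← hconst]
  refine eLpNorm_mono_enorm fun x => ?_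
  by_cases hx : x ∈ Icc 0 s
  · rw [indicator_of_mem hx, indicator_of_mem hx, ← ofReal_norm, ← ofReal_norm,
      Complex.norm_real, Real.norm_of_nonneg (by positivity)]
    refine ENNReal.ofReal_le_ofReal (two_mul_div_pi_le_norm_boxKernel hL ?_)
    rw [abs_of_nonneg hx.1]
    nlinarith [hx.2]
  · simp [indicator_of_notMem hx]

lemma ofReal_mul_eLpNorm_boxKernel_le_eLpNorm_indicator {s : ℝ} (hL : 0 < L) (hs : 0 ≤ s)
    (hsL : s * L ≤ 1 / 2) :
    ENNReal.ofReal (√(s * L) / π) * eLpNorm (boxKernel L) 2 volume ≤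
      eLpNorm ((Icc 0 s).indicator (boxKernel L)) 2 volume := by
  have hroots : √(s * L) * √(2 * L) = √2 * L * √s := by
    rw [Real.sqrt_mul hs, Real.sqrt_mul zero_le_two, mul_mul_mul_comm, Real.mul_self_sqrt hL.le]
    ring
  calc ENNReal.ofReal (√(s * L) / π) * eLpNorm (boxKernel L) 2 volume
      ≤ ENNReal.ofReal (√(s * L) / π) * ENNReal.ofReal √(2 * L) := by
        gcongr; exact eLpNorm_boxKernel_le hL
    _ ≤ ENNReal.ofReal (2 * L / π * √s) := by
        rw [← ENNReal.ofReal_mul (by positivity)]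
        refine ENNReal.ofReal_le_ofReal ?_
        rw [div_mul_eq_mul_div, hroots, div_mul_eq_mul_div]
        gcongr
        nlinarith [Real.sqrt_le_sqrt (show (2 : ℝ) ≤ 4 by norm_num),
          show √(4 : ℝ) = 2 by rw [show (4 : ℝ) = 2 ^ 2 by norm_num, Real.sqrt_sq zero_le_two]]
    _ ≤ _ := le_eLpNorm_indicator_boxKernel hL.le hs hsL

lemma eLpNorm_boxKernel_ne_zero (hL : 0 < L) : eLpNorm (boxKernel L) 2 volume ≠ 0 := by
  have hlow := le_eLpNorm_indicator_boxKernel (s := (2 * L)⁻¹) hL.le (by positivity)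
    (by field_simp; norm_num)
  refine (ENNReal.ofReal_pos.2 ?_).trans_le (hlow.trans (eLpNorm_indicator_le _)) |>.ne'
  positivity

lemma memLp_boxKernel (hL : 0 < L) : MemLp (boxKernel L) 2 :=
  ⟨(continuous_boxKernel L).aestronglyMeasurable,
    (eLpNorm_boxKernel_le hL).trans_lt ENNReal.ofReal_lt_top⟩

end BoxKernel

local notation "ℝ²" => EuclideanSpace ℝ (Fin 2)

noncomputable def coordEquiv : ℝ² ≃ᵐ ℝ × ℝ :=
  (MeasurableEquiv.toLp 2 (Fin 2 → ℝ)).symm.trans (MeasurableEquiv.finTwoArrow)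

lemma measurePreserving_coordEquiv : MeasurePreserving coordEquiv :=
  (volume_preserving_finTwoArrow ℝ).comp
    (EuclideanSpace.volume_preserving_symm_measurableEquiv_toLp _)

lemma inner_coordEquiv_symm (z : ℝ × ℝ) (x : ℝ²) :
    inner ℝ (coordEquiv.symm z) x = z.1 * x 0 + z.2 * x 1 := by
  simp [PiLp.inner_apply, Fin.sum_univ_two, coordEquiv, mul_comm]

def tensor (a b : ℝ → ℂ) (p : ℝ²) : ℂ := a (p 0) * b (p 1)

section Tensor

variable {a b : ℝ → ℂ} {p : ℝ≥0∞}

lemma tensor_eq_comp_coordEquiv (a b : ℝ → ℂ) :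
    tensor a b = (fun z : ℝ × ℝ => a z.1 * b z.2) ∘ coordEquiv := rfl

lemma eLpNorm_tensor (ha : AEStronglyMeasurable a) (hb : AEStronglyMeasurable b)
    (hp0 : p ≠ 0) (hp : p ≠ ∞) :
    eLpNorm (tensor a b) p volume = eLpNorm a p volume * eLpNorm b p volume := by
  rw [tensor_eq_comp_coordEquiv,
    eLpNorm_comp_measurePreserving (g := fun z : ℝ × ℝ => a z.1 * b z.2)
      (ha.comp_fst.mul hb.comp_snd) measurePreserving_coordEquiv,
    eLpNorm_mul_prod ha hb hp0 hp]

lemma MeasureTheory.MemLp.tensor (ha : MemLp a p) (hb : MemLp b p) (hp0 : p ≠ 0) (hp : p ≠ ∞) :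
    MemLp (tensor a b) p :=
  (ha.mul_prod hb hp0 hp).comp_measurePreserving measurePreserving_coordEquiv

lemma indicator_tensor (A B : Set ℝ) :
    {p : ℝ² | p 0 ∈ A ∧ p 1 ∈ B}.indicator (tensor a b) =
      tensor (A.indicator a) (B.indicator b) := by
  ext p
  by_cases hA : p 0 ∈ A <;> by_cases hB : p 1 ∈ B <;> simp [tensor, indicator, hA, hB]

lemma support_tensor_subset :
    Function.support (tensor a b) ⊆ {p | p 0 ∈ Function.support a ∧ p 1 ∈ Function.support b} :=
  fun p hp => by simpa [tensor, not_or] using hp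

lemma fourierInv_tensor (a b : ℝ → ℂ) : 𝓕⁻ (tensor a b) = tensor (𝓕⁻ a) (𝓕⁻ b) := by
  ext x
  simp only [Real.fourierInv_eq', tensor, smul_eq_mul]
  rw [← measurePreserving_coordEquiv.symm.integral_comp', Measure.volume_eq_prod,
    ← integral_prod_mul]
  congr 1 with z
  rw [inner_coordEquiv_symm, show coordEquiv.symm z 0 = z.1 from rfl,
    show coordEquiv.symm z 1 = z.2 from rfl, mul_mul_mul_comm, ← Complex.exp_add]
  simp only [RCLike.inner_apply, conj_trivial]
  congr 2
  push_cast
  ring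

end Tensor

lemma exists_bandlimited_concentrated_on_strip (h : ℝ) (hh : 0 < h) :
    ∃ f g : ℝ² → ℂ,
      MemLp f 2 volume ∧ ¬ (f =ᵐ[volume] 0) ∧ MemLp g 2 volume ∧ IsL2FourierTransform2 f g ∧
      Function.support g ⊆ {p | p 0 ∈ Icc 0 h⁻¹ ∧ p 1 ∈ Icc 0 (1/10)} ∧
      ENNReal.ofReal (1 / (10 * π ^ 2)) * eLpNorm f 2 volume ≤
        eLpNorm ({p : ℝ² | p 0 ∈ Icc 0 (h/10) ∧ p 1 ∈ Icc (0:ℝ) 1}.indicator f) 2 volume := by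
  set g := tensor (box h⁻¹) (box (1/10))
  have hfg : 𝓕⁻ g = tensor (boxKernel h⁻¹) (boxKernel (1/10)) := fourierInv_tensor _ _
  have hmeas (L : ℝ) : AEStronglyMeasurable (boxKernel L) :=
    (continuous_boxKernel L).aestronglyMeasurable
  have hf : MemLp (tensor (boxKernel h⁻¹) (boxKernel (1/10))) 2 :=
    (memLp_boxKernel (inv_pos.2 hh)).tensor (memLp_boxKernel (by norm_num)) two_ne_zero
      ENNReal.ofNat_ne_top
  refine ⟨_, g, hf, ?_, (memLp_box _ 2).tensor (memLp_box _ 2) two_ne_zero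
    ENNReal.ofNat_ne_top, ?_, ?_, ?_⟩
  · rw [← eLpNorm_eq_zero_iff hf.1 two_ne_zero, eLpNorm_tensor (hmeas _) (hmeas _) two_ne_zero
      ENNReal.ofNat_ne_top]
    exact mul_ne_zero (eLpNorm_boxKernel_ne_zero (inv_pos.2 hh))
      (eLpNorm_boxKernel_ne_zero (by norm_num))
  · intro φ
    rw [← hfg]
    exact integral_mul_eq_integral_fourierInv_mul_fourier
      (memLp_one_iff_integrable.1 ((memLp_box _ 1).tensor (memLp_box _ 1) one_ne_zero
        ENNReal.one_ne_top)) φ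
  · exact support_tensor_subset.trans fun p hp =>
      ⟨support_indicator_subset hp.1, support_indicator_subset hp.2⟩
  · have hX := ofReal_mul_eLpNorm_boxKernel_le_eLpNorm_indicator (s := h / 10) (L := h⁻¹)
      (inv_pos.2 hh) (by positivity) (by field_simp; norm_num)
    have hY := ofReal_mul_eLpNorm_boxKernel_le_eLpNorm_indicator (s := 1) (L := 1 / 10)
      (by norm_num) zero_le_one (by norm_num)
    rw [show h / 10 * h⁻¹ = 1 / 10 by field_simp] at hX
    rw [one_mul] at hY
    rw [indicator_tensor, eLpNorm_tensor ((hmeas _).indicator measurableSet_Icc)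
      ((hmeas _).indicator measurableSet_Icc) two_ne_zero ENNReal.ofNat_ne_top,
      eLpNorm_tensor (hmeas _) (hmeas _) two_ne_zero ENNReal.ofNat_ne_top]
    calc ENNReal.ofReal (1 / (10 * π ^ 2)) * (eLpNorm (boxKernel h⁻¹) 2 volume *
          eLpNorm (boxKernel (1 / 10)) 2 volume)
        = (ENNReal.ofReal (√(1 / 10) / π) * eLpNorm (boxKernel h⁻¹) 2 volume) *
            (ENNReal.ofReal (√(1 / 10) / π) * eLpNorm (boxKernel (1 / 10)) 2 volume) := by
          rw [mul_mul_mul_comm, ← ENNReal.ofReal_mul (by positivity), div_mul_div_comm,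
            Real.mul_self_sqrt (by norm_num)]
          congr 2
          ring
      _ ≤ _ := mul_le_mul' hX hY

/-- **Failure of the naïve 2D fractal uncertainty principle.** There is `c > 0` such that for
every `h ∈ (0,1)` there is a nonzero `f ∈ L²(ℝ²)` with `supp f̂ ⊆ h⁻¹Y = [0,h⁻¹] × [0,1/10]`
and `‖1_X f‖ ≥ c ‖f‖`, where `X = [0,h/10] × [0,1]`. In particular there are no `C, β > 0`
such that every `f ∈ L²(ℝ²)` with `supp f̂ ⊆ h⁻¹Y` satisfies `‖1_X f‖ ≤ C h^β ‖f‖` for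
all `h ∈ (0,1)`. -/
theorem no_naive_fup_in_2d :
    (∃ c : ℝ, 0 < c ∧ ∀ h : ℝ, h ∈ Set.Ioo (0:ℝ) 1 →
      ∃ f g : EuclideanSpace ℝ (Fin 2) → ℂ,
        MemLp f 2 volume ∧ ¬ (f =ᵐ[volume] 0) ∧
        MemLp g 2 volume ∧ IsL2FourierTransform2 f g ∧
        Function.support g ⊆ {p | p 0 ∈ Icc 0 h⁻¹ ∧ p 1 ∈ Icc 0 (1/10)} ∧
        ENNReal.ofReal c * eLpNorm f 2 volume ≤
          eLpNorm (({p : EuclideanSpace ℝ (Fin 2) | p 0 ∈ Icc 0 (h/10) ∧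
            p 1 ∈ Icc (0:ℝ) 1}).indicator f) 2 volume)
    ∧
    ¬ (∃ C : ℝ, 0 < C ∧ ∃ β : ℝ, 0 < β ∧
        ∀ h : ℝ, h ∈ Set.Ioo (0:ℝ) 1 →
        ∀ f g : EuclideanSpace ℝ (Fin 2) → ℂ,
          MemLp f 2 volume → MemLp g 2 volume →
          IsL2FourierTransform2 f g →
          Function.support g ⊆ {p | p 0 ∈ Icc 0 h⁻¹ ∧ p 1 ∈ Icc 0 (1/10)} →
          eLpNorm (({p : EuclideanSpace ℝ (Fin 2) | p 0 ∈ Icc 0 (h/10) ∧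
              p 1 ∈ Icc (0:ℝ) 1}).indicator f) 2 volume
            ≤ ENNReal.ofReal (C * h ^ β) * eLpNorm f 2 volume) := by
  have hc : (0 : ℝ) < 1 / (10 * π ^ 2) := by positivity
  refine ⟨⟨_, hc, fun h hh => exists_bandlimited_concentrated_on_strip h hh.1⟩, ?_⟩
  rintro ⟨C, hC, β, hβ, hFUP⟩
  obtain ⟨h, hh, hsmall⟩ := exists_mem_Ioo_mul_rpow_lt (C := C) hβ hc
  obtain ⟨f, g, hf, hf0, hg, hfg, hsupp, hconc⟩ := exists_bandlimited_concentrated_on_strip h hh.1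
  have hnorm : eLpNorm f 2 volume ≠ 0 := fun h0 => hf0 ((eLpNorm_eq_zero_iff hf.1 two_ne_zero).1 h0)
  have hle := (ENNReal.mul_le_mul_iff_left hnorm hf.2.ne).1
    (hconc.trans (hFUP h hh f g hf hg hfg hsupp))
  exact hsmall.not_ge ((ENNReal.ofReal_le_ofReal_iff
    (mul_nonneg hC.le (Real.rpow_nonneg hh.1.le β))).1 hle)
end

section
/- Let ν ∈ (0,1) and let X ⊆ ℝ be ν-porous up to scale 0, meaning that for every interval I ⊆ ℝ with 0 < |I| ≤ 1 there exists a subinterval J ⊆ I with |J| = ν|I| and J ∩ X = ∅. Then for every h ∈ (0,1), the closed (νh/10)-neighborhood {x ∈ ℝ : dist(x, X) ≤ νh/10} of X is (ν/2)-porous up to scale h. -/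
open Set Metric

/-- A set `X ⊆ ℝ` is `ν`-porous up to scale `h`: every interval `I = [a,b]` with
`h ≤ |I| ≤ 1` contains a subinterval `J = [c,d]` with `|J| = ν|I|` and `J ∩ X = ∅`. -/
def IsPorousUpTo (ν h : ℝ) (X : Set ℝ) : Prop :=
  ∀ a b : ℝ, h ≤ b - a → b - a ≤ 1 →
    ∃ c d : ℝ, a ≤ c ∧ d ≤ b ∧ d - c = ν * (b - a) ∧ Set.Icc c d ∩ X = ∅

/-- A set `X ⊆ ℝ` is `ν`-porous up to scale `0`: every interval `I = [a,b]` with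
`0 < |I| ≤ 1` contains a subinterval `J = [c,d]` with `|J| = ν|I|` and `J ∩ X = ∅`. -/
def IsPorousUpToZero (ν : ℝ) (X : Set ℝ) : Prop :=
  ∀ a b : ℝ, 0 < b - a → b - a ≤ 1 →
    ∃ c d : ℝ, a ≤ c ∧ d ≤ b ∧ d - c = ν * (b - a) ∧ Set.Icc c d ∩ X = ∅

/-!
A gap `[c, d]` of `X` of length `ν|I|` keeps its middle half `[c + ν|I|/4, d - ν|I|/4]`
disjoint from every `δ`-neighbourhood of `X` with `δ < ν|I|/4`; when `|I| ≥ h` this covers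
`δ = νh/10`.
-/

lemma IsPorousUpToZero.isPorousUpTo {ν h : ℝ} {X : Set ℝ} (hX : IsPorousUpToZero ν X)
    (hh : 0 < h) : IsPorousUpTo ν h X :=
  fun a b hab hab' => hX a b (hh.trans_le hab) hab'

lemma Icc_shrink_inter_cthickening_eq_empty {X : Set ℝ} {c d r δ : ℝ} (hδ : 0 ≤ δ)
    (hδr : δ < r) (hX : Icc c d ∩ X = ∅) : Icc (c + r) (d - r) ∩ cthickening δ X = ∅ := by
  refine eq_empty_of_forall_notMem fun x ⟨⟨hcx, hxd⟩, hxX⟩ => ?_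
  obtain ⟨y, hyX, hxy⟩ :=
    mem_thickening_iff.mp (cthickening_subset_thickening' (hδ.trans_lt hδr) hδr X hxX)
  rw [Real.dist_eq, abs_lt] at hxy
  exact hX.subset ⟨⟨by linarith, by linarith⟩, hyX⟩

lemma IsPorousUpTo.cthickening {ν h δ : ℝ} {X : Set ℝ} (hX : IsPorousUpTo ν h X) (hν : 0 ≤ ν)
    (hδ : 0 ≤ δ) (hδh : δ < ν * h / 4) : IsPorousUpTo (ν / 2) h (cthickening δ X) := by
  intro a b hab hab'
  obtain ⟨c, d, hac, hdb, hcd, hgap⟩ := hX a b hab hab'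
  have hr : ν * h / 4 ≤ ν * (b - a) / 4 := by gcongr
  have hr' : 0 ≤ ν * (b - a) / 4 := by linarith
  exact ⟨c + ν * (b - a) / 4, d - ν * (b - a) / 4, by linarith, by linarith, by linarith,
    Icc_shrink_inter_cthickening_eq_empty hδ (hδh.trans_le hr) hgap⟩

/-- If `X ⊆ ℝ` is `ν`-porous up to scale `0`, then for every `h ∈ (0,1)` the closed
`(νh/10)`-neighborhood `{x : dist(x,X) ≤ νh/10}` of `X` is `ν/2`-porous up to scale `h`. -/
theorem cthickening_porous (ν : ℝ) (hν : ν ∈ Set.Ioo (0:ℝ) 1) (X : Set ℝ)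
    (hX : IsPorousUpToZero ν X) :
    ∀ h : ℝ, h ∈ Set.Ioo (0:ℝ) 1 →
      IsPorousUpTo (ν / 2) h (Metric.cthickening (ν * h / 10) X) := by
  rintro h ⟨hh, -⟩
  have hνh : 0 < ν * h := mul_pos hν.1 hh
  exact (hX.isPorousUpTo hh).cthickening hν.1.le (by positivity) (by linarith)
end
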